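/- arXiv:1209.2202 — 10 statements merged into one kernel-verified Lean document; each statement's English description precedes it below -/
import Mathlib

section
/- For every finite simple graph G of order n, χ₂(G) + χ₂(Ḡ) ≤ n + 1. -/
open SimpleGraph

/-- The graph on the vertices of `G` where two vertices are adjacent
iff their distance in `G` is exactly 2. -/
def distTwoGraph {V : Type*} (G : SimpleGraph V) : SimpleGraph V where
  Adj u v := G.dist u v = 2
  symm := by
    constructor
    intro u v h
    rwa [SimpleGraph.dist_comm]
  loopless := by
    constructor
    intro v h
    simp [SimpleGraph.dist_self] at h

/-- The 2-proper chromatic number of `G`. -/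
noncomputable def chi2 {V : Type*} (G : SimpleGraph V) : ℕ∞ :=
  (distTwoGraph G).chromaticNumber

/-!
A vertex at distance exactly 2 from another is not adjacent to it, so the distance-2 graph of `G`
is a subgraph of `Gᶜ`, and of `G` for the complement. Hence `χ₂(G) + χ₂(Gᶜ) ≤ χ(Gᶜ) + χ(G)`, and
the bound is the Nordhaus–Gaddum inequality `χ(G) + χ(Gᶜ) ≤ n + 1`. The latter is proved by adding
the vertices one at a time: the new vertex `v` needs a fresh colour in `G` only if it has at
least `a` neighbours among the previous ones, `a` the number of colours used so far, and likewise in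
`Gᶜ`; since its degrees in `G` and `Gᶜ` add up to the number of previous vertices, the two colour
counts cannot both outgrow the bound.
-/

open Finset Function

namespace SimpleGraph

variable {V : Type*} (G : SimpleGraph V)

def IsBddColoringOn (s : Finset V) (f : V → ℕ) (a : ℕ) : Prop :=
  (∀ u ∈ s, f u < a) ∧ ∀ u ∈ s, ∀ w ∈ s, G.Adj u w → f u ≠ f w

variable {G}

lemma IsBddColoringOn.colorable [Fintype V] {f : V → ℕ} {a : ℕ}
    (h : G.IsBddColoringOn univ f a) : G.Colorable a :=
  (G.colorable_iff_exists_bdd_nat_coloring a).2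
    ⟨Coloring.mk f fun huw => h.2 _ (mem_univ _) _ (mem_univ _) huw, fun u => h.1 u (mem_univ u)⟩

lemma IsBddColoringOn.insert_update [DecidableEq V] {s : Finset V} {f : V → ℕ} {a a' c : ℕ}
    {v : V} (h : G.IsBddColoringOn s f a) (hvs : v ∉ s) (hc : c < a') (ha : a ≤ a')
    (hv : ∀ u ∈ s, G.Adj v u → f u ≠ c) :
    G.IsBddColoringOn (insert v s) (update f v c) a' := by
  refine ⟨fun u hu => ?_, fun u hu w hw huw => ?_⟩
  · rcases mem_insert.1 hu with rfl | hus
    · simpa using hc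
    · rw [update_of_ne (ne_of_mem_of_not_mem hus hvs)]
      exact (h.1 u hus).trans_le ha
  · rcases mem_insert.1 hu with rfl | hus <;> rcases mem_insert.1 hw with rfl | hws
    · exact (G.irrefl huw).elim
    · rw [update_self, update_of_ne huw.ne']
      exact (hv w hws huw).symm
    · rw [update_self, update_of_ne huw.ne]
      exact hv u hus huw.symm
    · rw [update_of_ne (ne_of_mem_of_not_mem hus hvs), update_of_ne (ne_of_mem_of_not_mem hws hvs)]
      exact h.2 u hus w hws huw

lemma exists_lt_forall_ne_of_card_lt (f : V → ℕ) {t : Finset V} {a : ℕ} (ht : #t < a) :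
    ∃ c < a, ∀ u ∈ t, f u ≠ c := by
  classical
  obtain ⟨c, hc, hct⟩ := exists_mem_notMem_of_card_lt_card (s := t.image f) (t := range a)
    (card_image_le.trans_lt (by rwa [card_range]))
  exact ⟨c, mem_range.1 hc, fun u hu hfu => hct (mem_image.2 ⟨u, hu, hfu⟩)⟩

lemma IsBddColoringOn.exists_insert [DecidableEq V] [DecidableRel G.Adj] {s : Finset V}
    {f : V → ℕ} {a : ℕ} {v : V} (h : G.IsBddColoringOn s f a) (hvs : v ∉ s) :
    ∃ f', G.IsBddColoringOn (insert v s) f'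
      (if #{u ∈ s | G.Adj v u} < a then a else a + 1) := by
  split_ifs with hd
  · obtain ⟨c, hc, hv⟩ := exists_lt_forall_ne_of_card_lt f hd
    exact ⟨_, h.insert_update hvs hc le_rfl fun u hu huv => hv u (mem_filter.2 ⟨hu, huv⟩)⟩
  · exact ⟨_, h.insert_update hvs (lt_add_one a) a.le_succ fun u hu _ => (h.1 u hu).ne⟩

lemma card_filter_adj_add_card_filter_compl_adj [DecidableEq V] [DecidableRel G.Adj]
    {s : Finset V} {v : V} (hv : v ∉ s) :
    #{u ∈ s | G.Adj v u} + #{u ∈ s | Gᶜ.Adj v u} = #s := by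
  rw [← card_filter_add_card_filter_not (s := s) (G.Adj v)]
  congr 2
  refine filter_congr fun u hu => ?_
  rw [compl_adj, and_iff_right]
  rintro rfl
  exact hv hu

lemma exists_isBddColoringOn_compl_add_le (s : Finset V) :
    ∃ (f g : V → ℕ) (a b : ℕ), G.IsBddColoringOn s f a ∧ Gᶜ.IsBddColoringOn s g b ∧
      a + b ≤ #s + 1 := by
  classical
  induction s using Finset.induction with
  | empty => exact ⟨0, 0, 0, 1, by simp [IsBddColoringOn]⟩
  | @insert v s hv ih =>
    obtain ⟨f, g, a, b, hf, hg, hab⟩ := ih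
    obtain ⟨f', hf'⟩ := hf.exists_insert hv
    obtain ⟨g', hg'⟩ := hg.exists_insert hv
    refine ⟨f', g', _, _, hf', hg', ?_⟩
    have hdeg := card_filter_adj_add_card_filter_compl_adj (G := G) hv
    rw [card_insert_of_notMem hv]
    split_ifs <;> omega

theorem chromaticNumber_add_chromaticNumber_compl_le [Fintype V] :
    G.chromaticNumber + Gᶜ.chromaticNumber ≤ Fintype.card V + 1 := by
  obtain ⟨f, g, a, b, hf, hg, hab⟩ := exists_isBddColoringOn_compl_add_le (G := G) univ
  calc G.chromaticNumber + Gᶜ.chromaticNumber ≤ a + b :=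
        add_le_add hf.colorable.chromaticNumber_le hg.colorable.chromaticNumber_le
    _ ≤ Fintype.card V + 1 := by exact_mod_cast hab

end SimpleGraph

lemma distTwoGraph_le_compl {V : Type*} (G : SimpleGraph V) : distTwoGraph G ≤ Gᶜ := by
  intro u v (h : G.dist u v = 2)
  refine ⟨fun huv => by simp [huv] at h, fun huv => ?_⟩
  rw [dist_eq_one_iff_adj.2 huv] at h
  omega

theorem chi2_add_chi2_compl_le {V : Type*} [Fintype V] (G : SimpleGraph V) :
    chi2 G + chi2 Gᶜ ≤ (Fintype.card V : ℕ∞) + 1 :=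
  calc chi2 G + chi2 Gᶜ ≤ Gᶜ.chromaticNumber + G.chromaticNumber :=
        add_le_add (chromaticNumber_mono _ (distTwoGraph_le_compl G))
          (chromaticNumber_mono G (by simpa using distTwoGraph_le_compl Gᶜ))
    _ ≤ Fintype.card V + 1 := (add_comm _ _).trans_le chromaticNumber_add_chromaticNumber_compl_le
end

section
/- For every integer n ≥ 13 there exists a finite simple graph G of order n such that χ₂(G) + χ₂(Ḡ) = n + 1. -/
open SimpleGraph

/-!
Take a split graph on `n` vertices: a clique `K` of size `n - 6` and an independent set `I` of
size 6, where some vertex of `K` has no neighbour in `I`, any two vertices of `I` have a common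
neighbour in `K`, and any two vertices of `K` have a common non-neighbour in `I`. Then both `G`
and `Gᶜ` have diameter at most 2, so the distance-2 graph of each is the other one, and
`χ₂(G) + χ₂(Gᶜ) = χ(Gᶜ) + χ(G) = (|I| + 1) + |K| = n + 1`.
-/
namespace SimpleGraph

section DistTwo

variable {V W : Type*} {G : SimpleGraph V} {H : SimpleGraph W}

def Iso.compl (e : G ≃g H) : Gᶜ ≃g Hᶜ where
  toEquiv := e.toEquiv
  map_rel_iff' := by simp [e.map_adj_iff, e.injective.ne_iff]

lemma distTwoGraph_adj {u v : V} :
    (distTwoGraph G).Adj u v ↔ u ≠ v ∧ ¬G.Adj u v ∧ (G.commonNeighbors u v).Nonempty := by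
  rw [← edist_eq_two_iff]
  exact ENat.toNat_eq_iff two_ne_zero

def Iso.distTwoGraph (e : G ≃g H) : distTwoGraph G ≃g distTwoGraph H where
  toEquiv := e.toEquiv
  map_rel_iff' := by
    simp [distTwoGraph_adj, Set.Nonempty, e.surjective.exists, mem_commonNeighbors,
      e.map_adj_iff, e.injective.ne_iff]

lemma chi2_congr (e : G ≃g H) : chi2 G = chi2 H :=
  chromaticNumber_congr e.distTwoGraph

lemma distTwoGraph_eq_compl
    (h : ∀ u v, u ≠ v → ¬G.Adj u v → (G.commonNeighbors u v).Nonempty) :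
    distTwoGraph G = Gᶜ := by
  ext u v
  rw [distTwoGraph_adj, compl_adj]
  exact ⟨fun huv ↦ ⟨huv.1, huv.2.1⟩, fun huv ↦ ⟨huv.1, huv.2, h u v huv.1 huv.2⟩⟩

end DistTwo

section Split

variable {α β : Type*}

def splitGraph (R : α → β → Prop) : SimpleGraph (α ⊕ β) where
  Adj
    | .inl a, .inl a' => a ≠ a'
    | .inl a, .inr b => R a b
    | .inr b, .inl a => R a b
    | .inr _, .inr _ => False
  symm := ⟨by rintro (a | b) (a' | b') h <;> simp_all [ne_comm]⟩
  loopless := ⟨by rintro (a | b) h <;> simp_all⟩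

variable {R : α → β → Prop}

@[simp] lemma splitGraph_adj_inl_inl {a a' : α} :
    (splitGraph R).Adj (.inl a) (.inl a') ↔ a ≠ a' :=
  Iff.rfl

@[simp] lemma splitGraph_adj_inl_inr {a : α} {b : β} :
    (splitGraph R).Adj (.inl a) (.inr b) ↔ R a b :=
  Iff.rfl

@[simp] lemma splitGraph_adj_inr_inl {a : α} {b : β} :
    (splitGraph R).Adj (.inr b) (.inl a) ↔ R a b :=
  Iff.rfl

@[simp] lemma not_splitGraph_adj_inr_inr {b b' : β} : ¬(splitGraph R).Adj (.inr b) (.inr b') :=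
  id

lemma splitGraph_commonNeighbors_nonempty (hR : ∀ b b', ∃ a, R a b ∧ R a b') (u v : α ⊕ β)
    (hne : u ≠ v) (hnadj : ¬(splitGraph R).Adj u v) :
    ((splitGraph R).commonNeighbors u v).Nonempty := by
  rcases u with a | b <;> rcases v with a' | b'
  · simp_all
  · obtain ⟨c, hc, -⟩ := hR b' b'
    exact ⟨.inl c, ne_of_apply_ne (R · b') (by simp_all), hc⟩
  · obtain ⟨c, hc, -⟩ := hR b b
    exact ⟨.inl c, hc, ne_of_apply_ne (R · b) (by simp_all)⟩
  · obtain ⟨c, hc, hc'⟩ := hR b b'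
    exact ⟨.inl c, hc, hc'⟩

lemma compl_splitGraph_commonNeighbors_nonempty (hR : ∀ a a', ∃ b, ¬R a b ∧ ¬R a' b)
    (u v : α ⊕ β) (hne : u ≠ v) (hnadj : ¬(splitGraph R)ᶜ.Adj u v) :
    ((splitGraph R)ᶜ.commonNeighbors u v).Nonempty := by
  rcases u with a | b <;> rcases v with a' | b'
  · obtain ⟨c, hc, hc'⟩ := hR a a'
    exact ⟨.inr c, by simpa using hc, by simpa using hc'⟩
  · obtain ⟨c, hc, -⟩ := hR a a
    exact ⟨.inr c, by simpa using hc, by simpa using ne_of_apply_ne (R a) (by simp_all)⟩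
  · obtain ⟨c, hc, -⟩ := hR a' a'
    exact ⟨.inr c, by simpa using ne_of_apply_ne (R a') (by simp_all), by simpa using hc⟩
  · simp_all

lemma chromaticNumber_splitGraph [Fintype α] (hR : ∀ b, ∃ a, ¬R a b) :
    (splitGraph R).chromaticNumber = Fintype.card α := by
  choose f hf using hR
  apply le_antisymm
  · refine (Coloring.mk (Sum.elim id f) ?_).colorable.chromaticNumber_le
    rintro (a | b) (a' | b') h heq
    · exact h heq
    · exact hf b' ((congrArg (R · b') heq).mp h)
    · exact hf b ((congrArg (R · b) heq).mpr h)
    · exact h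
  · exact le_chromaticNumber_of_pairwise_adj (by simp) Sum.inl fun a a' h ↦ h

lemma chromaticNumber_compl_splitGraph [Fintype β] (hR : ∃ a, ∀ b, ¬R a b) :
    (splitGraph R)ᶜ.chromaticNumber = Fintype.card β + 1 := by
  obtain ⟨a₀, ha₀⟩ := hR
  apply le_antisymm
  · refine (Coloring.mk (Sum.elim (fun _ ↦ none) some) ?_).colorable.chromaticNumber_le.trans ?_
    · rintro (a | b) (a' | b') h <;> simp_all
    · simp
  · refine le_chromaticNumber_of_pairwise_adj (by simp) (Option.elim · (.inl a₀) .inr) ?_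
    rintro (_ | b) (_ | b') h <;> simp_all

theorem chi2_splitGraph_add_chi2_compl [Fintype α] [Fintype β]
    (hcover : ∀ b b', ∃ a, R a b ∧ R a b') (hmiss : ∀ a a', ∃ b, ¬R a b ∧ ¬R a' b)
    (hisolated : ∃ a, ∀ b, ¬R a b) :
    chi2 (splitGraph R) + chi2 (splitGraph R)ᶜ = Fintype.card (α ⊕ β) + 1 := by
  rw [chi2, chi2, distTwoGraph_eq_compl (splitGraph_commonNeighbors_nonempty hcover),
    distTwoGraph_eq_compl (compl_splitGraph_commonNeighbors_nonempty hmiss), compl_compl,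
    chromaticNumber_compl_splitGraph hisolated,
    chromaticNumber_splitGraph fun b ↦ hisolated.imp fun _ ha ↦ ha b, Fintype.card_sum]
  push_cast
  ring

end Split

end SimpleGraph

open SimpleGraph

/- `{0, 1, 3} - {0, 1, 3}` is all of `ZMod 6`, so any two points lie in a common translate of
`{0, 1, 3}` and any two translates meet, hence together miss a point. -/
def diffBlock : Finset (ZMod 6) := {0, 1, 3}

def translateRel (γ : Type*) : ZMod 6 ⊕ γ → ZMod 6 → Prop
  | .inl i, b => b - i ∈ diffBlock
  | .inr _, _ => False

lemma translateRel_cover (γ : Type*) (b b' : ZMod 6) :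
    ∃ a, translateRel γ a b ∧ translateRel γ a b' := by
  have key : ∀ b b' : ZMod 6, ∃ i, b - i ∈ diffBlock ∧ b' - i ∈ diffBlock := by decide
  obtain ⟨i, hi⟩ := key b b'
  exact ⟨.inl i, hi⟩

lemma translateRel_miss (γ : Type*) (a a' : ZMod 6 ⊕ γ) :
    ∃ b, ¬translateRel γ a b ∧ ¬translateRel γ a' b := by
  have key : ∀ i j : ZMod 6, ∃ b, b - i ∉ diffBlock ∧ b - j ∉ diffBlock := by decide
  rcases a with i | _ <;> rcases a' with j | _
  · exact key i j
  · exact (key i i).imp fun _ h ↦ ⟨h.1, id⟩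
  · exact (key j j).imp fun _ h ↦ ⟨id, h.2⟩
  · exact ⟨0, id, id⟩

theorem exists_chi2_add_chi2_compl_eq (n : ℕ) (hn : 13 ≤ n) :
    ∃ G : SimpleGraph (Fin n), chi2 G + chi2 Gᶜ = (n : ℕ∞) + 1 := by
  have hcard : Fintype.card ((ZMod 6 ⊕ Fin (n - 12)) ⊕ ZMod 6) = n := by
    simp only [Fintype.card_sum, ZMod.card, Fintype.card_fin]
    omega
  let e : Fin n ≃ (ZMod 6 ⊕ Fin (n - 12)) ⊕ ZMod 6 := Fintype.equivOfCardEq (by simp [hcard])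
  refine ⟨(splitGraph (translateRel (Fin (n - 12)))).comap e, ?_⟩
  rw [chi2_congr (Iso.comap e _), chi2_congr (Iso.comap e _).compl,
    chi2_splitGraph_add_chi2_compl (translateRel_cover _) (translateRel_miss _)
      ⟨.inr ⟨0, by omega⟩, fun _ ↦ id⟩, hcard]
end

section
/- Let G be a finite simple graph of order n ≥ 5. If the minimum degree satisfies 2·δ(G) ≥ n + 1 (i.e. δ(G) ≥ (n+1)/2), then the injective chromatic number satisfies χᵢ(G) = n. -/
/-!
Two vertices whose degrees add up to more than `n` share a neighbour by pigeonhole, so under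
`2δ > n` the common-neighbour graph is complete and needs `n` colours.
-/

open SimpleGraph Finset

/-- The graph on the vertices of `G` where two distinct vertices are adjacent
iff they have a common neighbor in `G`. -/
def commonNbrGraph {V : Type*} (G : SimpleGraph V) : SimpleGraph V where
  Adj u v := u ≠ v ∧ ∃ w, G.Adj u w ∧ G.Adj v w
  symm := by
    constructor
    rintro u v ⟨huv, w, h1, h2⟩
    exact ⟨huv.symm, w, h2, h1⟩
  loopless := by
    constructor
    rintro v ⟨hv, -⟩
    exact hv rfl

/-- The injective chromatic number of `G`. -/
noncomputable def chiInj {V : Type*} (G : SimpleGraph V) : ℕ∞ :=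
  (commonNbrGraph G).chromaticNumber

section

variable {V : Type*} [Fintype V] {G : SimpleGraph V} [DecidableRel G.Adj]

theorem SimpleGraph.exists_adj_adj_of_card_lt_degree_add_degree {u v : V}
    (h : Fintype.card V < G.degree u + G.degree v) : ∃ w, G.Adj u w ∧ G.Adj v w := by
  classical
  obtain ⟨w, hw⟩ := inter_nonempty_of_card_lt_card_add_card
    (subset_univ (G.neighborFinset u)) (subset_univ (G.neighborFinset v)) (by simpa using h)
  simp only [mem_inter, mem_neighborFinset] at hw
  exact ⟨w, hw⟩

theorem commonNbrGraph_eq_top_of_card_lt_two_mul_minDegree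
    (h : Fintype.card V < 2 * G.minDegree) : commonNbrGraph G = ⊤ := by
  ext u v
  refine ⟨fun huv => huv.1, fun huv => ⟨huv, G.exists_adj_adj_of_card_lt_degree_add_degree ?_⟩⟩
  have := G.minDegree_le_degree u
  have := G.minDegree_le_degree v
  omega

end

theorem chiInj_eq_card_of_minDegree_general {V : Type*} [Fintype V] (G : SimpleGraph V)
    [DecidableRel G.Adj]
    (hδ : Fintype.card V + 1 ≤ 2 * G.minDegree) :
    chiInj G = (Fintype.card V : ℕ∞) := by
  rw [chiInj, commonNbrGraph_eq_top_of_card_lt_two_mul_minDegree hδ, chromaticNumber_top]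

theorem chiInj_eq_card_of_minDegree {V : Type*} [Fintype V] (G : SimpleGraph V)
    [DecidableRel G.Adj] (hn : 5 ≤ Fintype.card V)
    (hδ : Fintype.card V + 1 ≤ 2 * G.minDegree) :
    chiInj G = (Fintype.card V : ℕ∞) :=
  chiInj_eq_card_of_minDegree_general G hδ
end

section
/- Let G be a finite simple graph of order n ≥ 5. If the minimum degree satisfies δ(G) = ⌊(n−1)/2⌋, then the injective chromatic number satisfies χᵢ(G) ≥ δ(G) + 1. -/
/-!
Vertices that are non-adjacent in the common-neighbour graph have disjoint neighbourhoods in `G`.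
Three pairwise disjoint neighbourhoods `N(u), N(v), N(w)` never cover `V`: if, say, `u ∈ N(v)`,
then `w` lies in `N(u)` or `N(v)`, putting `u` in `N(v) ∩ N(w)` or `v` in `N(u) ∩ N(w)`.
So an independent triple of the common-neighbour graph would give `3δ < n`, while
`3⌊(n-1)/2⌋ ≥ n` for `n ≥ 5`. Hence its independence number is at most `2`, an injective
colouring needs at least `n / 2` colours, and `⌈n / 2⌉ = ⌊(n-1)/2⌋ + 1`.
-/
open SimpleGraph

open Finset

namespace SimpleGraph

variable {V : Type*}

theorem card_le_indepNum_mul_of_colorable [Fintype V] {H : SimpleGraph V} {m : ℕ}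
    (hm : H.Colorable m) : Fintype.card V ≤ H.indepNum * m := by
  obtain ⟨C⟩ := hm
  have hclass : ∀ c, #{v | C v = c} ≤ H.indepNum := fun c ↦
    IsIndepSet.card_le_indepNum <| by
      simpa [Set.ext_iff, Coloring.colorClass] using C.isIndepSet_colorClass c
  calc Fintype.card V = ∑ c : Fin m, #{v | C v = c} :=
        card_eq_sum_card_fiberwise fun v _ ↦ mem_univ (C v)
    _ ≤ ∑ _c : Fin m, H.indepNum := sum_le_sum fun c _ ↦ hclass c
    _ = H.indepNum * m := by simp [mul_comm]

variable [Fintype V] {G : SimpleGraph V} [DecidableRel G.Adj]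

theorem degree_add_degree_add_degree_lt_card {u v w : V}
    (duv : Disjoint (G.neighborFinset u) (G.neighborFinset v))
    (duw : Disjoint (G.neighborFinset u) (G.neighborFinset w))
    (dvw : Disjoint (G.neighborFinset v) (G.neighborFinset w)) :
    G.degree u + G.degree v + G.degree w < Fintype.card V := by
  classical
  obtain ⟨x, hx⟩ : ∃ x, x ∉ G.neighborFinset u ∪ G.neighborFinset v ∪ G.neighborFinset w := by
    by_contra! h
    have hmem : ∀ x, G.Adj u x ∨ G.Adj v x ∨ G.Adj w x := fun x ↦ by
      simpa [or_assoc] using h x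
    simp only [Finset.disjoint_left, mem_neighborFinset] at duv duw dvw
    rcases hmem u with hu | hu | hu
    · exact G.loopless.irrefl u hu
    · rcases hmem w with hw | hw | hw
      · exact dvw hu hw.symm
      · exact duw hu.symm hw.symm
      · exact G.loopless.irrefl w hw
    · rcases hmem v with hv | hv | hv
      · exact dvw hv.symm hu
      · exact G.loopless.irrefl v hv
      · exact duv hu.symm hv.symm
  calc G.degree u + G.degree v + G.degree w
      = #(G.neighborFinset u ∪ G.neighborFinset v ∪ G.neighborFinset w) := by
        rw [card_union_of_disjoint (disjoint_union_left.2 ⟨duw, dvw⟩),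
          card_union_of_disjoint duv, card_neighborFinset_eq_degree,
          card_neighborFinset_eq_degree, card_neighborFinset_eq_degree]
    _ < Fintype.card V := card_lt_univ_of_notMem hx

end SimpleGraph

theorem disjoint_neighborFinset_of_not_commonNbrGraph_adj {V : Type*} [Fintype V]
    {G : SimpleGraph V} [DecidableRel G.Adj] {u v : V} (huv : u ≠ v)
    (h : ¬(commonNbrGraph G).Adj u v) :
    Disjoint (G.neighborFinset u) (G.neighborFinset v) :=
  disjoint_left.2 fun _ hu hv ↦ h ⟨huv, _, (G.mem_neighborFinset u _).1 hu,
    (G.mem_neighborFinset v _).1 hv⟩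

theorem indepNum_commonNbrGraph_le_two {V : Type*} [Fintype V] {G : SimpleGraph V}
    [DecidableRel G.Adj] (h : Fintype.card V ≤ 3 * G.minDegree) :
    (commonNbrGraph G).indepNum ≤ 2 := by
  obtain ⟨s, hs⟩ := (commonNbrGraph G).exists_isNIndepSet_indepNum
  by_contra! h2
  obtain ⟨u, hu, v, hv, w, hw, huv, huw, hvw⟩ := two_lt_card.1 (hs.card_eq ▸ h2)
  have hind := hs.isIndepSet
  have hdeg := degree_add_degree_add_degree_lt_card
    (disjoint_neighborFinset_of_not_commonNbrGraph_adj huv (hind hu hv huv))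
    (disjoint_neighborFinset_of_not_commonNbrGraph_adj huw (hind hu hw huw))
    (disjoint_neighborFinset_of_not_commonNbrGraph_adj hvw (hind hv hw hvw))
  have := G.minDegree_le_degree u
  have := G.minDegree_le_degree v
  have := G.minDegree_le_degree w
  omega

theorem chiInj_ge_of_minDegree {V : Type*} [Fintype V] (G : SimpleGraph V)
    [DecidableRel G.Adj] (hn : 5 ≤ Fintype.card V)
    (hδ : G.minDegree = (Fintype.card V - 1) / 2) :
    (G.minDegree : ℕ∞) + 1 ≤ chiInj G := by
  have hindep := indepNum_commonNbrGraph_le_two (G := G) (by omega)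
  rw [chiInj, ← Nat.cast_one, ← Nat.cast_add, le_chromaticNumber_iff_colorable]
  intro m hm
  have hcard := card_le_indepNum_mul_of_colorable hm
  have hcolors := Nat.mul_le_mul_right m hindep
  exact_mod_cast (by omega : G.minDegree + 1 ≤ m)
end

section
/- Let G be a k-regular finite simple graph of order n ≥ 5. If 2k > n or 2k < n − 2, then n + 1 ≤ χᵢ(G) + χᵢ(Ḡ) ≤ 2n. -/
open SimpleGraph

/-! If `2k > n`, any two neighbourhoods in a `k`-regular graph meet, so `χᵢ(G) = n`; if
`2k < n - 2`, the complement is `(n - 1 - k)`-regular with `2(n - 1 - k) > n`, so `χᵢ(Ḡ) = n`.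
Either way the other summand is at least `1`, and each is at most `n`. -/

namespace SimpleGraph

variable {V : Type*} [Fintype V] (G : SimpleGraph V) [DecidableRel G.Adj]

lemma exists_adj_adj_of_card_lt_degree_add_degree_s6 {u v : V}
    (h : Fintype.card V < G.degree u + G.degree v) : ∃ w, G.Adj u w ∧ G.Adj v w := by
  classical
  rw [← card_neighborFinset_eq_degree, ← card_neighborFinset_eq_degree] at h
  obtain ⟨w, hw⟩ := Finset.inter_nonempty_of_card_lt_card_add_card
    (Finset.subset_univ _) (Finset.subset_univ _) (by simpa only [Finset.card_univ] using h)
  rw [Finset.mem_inter, mem_neighborFinset, mem_neighborFinset] at hw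
  exact ⟨w, hw⟩

lemma commonNbrGraph_eq_top_of_isRegularOfDegree {k : ℕ} (hreg : G.IsRegularOfDegree k)
    (hk : Fintype.card V < 2 * k) : commonNbrGraph G = ⊤ := by
  ext u v
  refine ⟨fun h => h.1, fun huv => ⟨huv, G.exists_adj_adj_of_card_lt_degree_add_degree_s6 ?_⟩⟩
  rw [hreg u, hreg v]
  omega

lemma chiInj_eq_card_of_isRegularOfDegree {k : ℕ} (hreg : G.IsRegularOfDegree k)
    (hk : Fintype.card V < 2 * k) : chiInj G = Fintype.card V := by
  rw [chiInj, G.commonNbrGraph_eq_top_of_isRegularOfDegree hreg hk, chromaticNumber_top]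

end SimpleGraph

lemma chiInj_le_card {V : Type*} [Fintype V] (G : SimpleGraph V) :
    chiInj G ≤ Fintype.card V :=
  chromaticNumber_le_card

lemma one_le_chiInj {V : Type*} [Fintype V] [Nonempty V] (G : SimpleGraph V) :
    1 ≤ chiInj G :=
  Order.one_le_iff_pos.2 <| (commonNbrGraph G).colorable_of_fintype.chromaticNumber_pos

theorem chiInj_nordhaus_gaddum_regular_far {V : Type*} [Fintype V] (G : SimpleGraph V)
    [DecidableRel G.Adj] (k : ℕ) (hn : 5 ≤ Fintype.card V)
    (hreg : G.IsRegularOfDegree k)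
    (hk : 2 * k > Fintype.card V ∨ 2 * k < Fintype.card V - 2) :
    (Fintype.card V : ℕ∞) + 1 ≤ chiInj G + chiInj Gᶜ ∧
      chiInj G + chiInj Gᶜ ≤ 2 * (Fintype.card V : ℕ∞) := by
  classical
  have : Nonempty V := Fintype.card_pos_iff.mp (by omega)
  refine ⟨?_, two_mul (Fintype.card V : ℕ∞) ▸ add_le_add (chiInj_le_card G) (chiInj_le_card Gᶜ)⟩
  rcases hk with hk | hk
  · rw [G.chiInj_eq_card_of_isRegularOfDegree hreg hk]
    exact add_le_add_right (one_le_chiInj Gᶜ) _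
  · have hk_lt : k < Fintype.card V := hreg (Classical.arbitrary V) ▸ G.degree_lt_card_verts _
    rw [Gᶜ.chiInj_eq_card_of_isRegularOfDegree hreg.compl (by omega), add_comm]
    exact add_le_add_left (one_le_chiInj G) _
end

section
/- Let G be a k-regular finite simple graph of order n ≥ 5. If 2k = n or 2k = n − 2, then n ≤ χᵢ(G) + χᵢ(Ḡ) ≤ 2n. -/
open SimpleGraph

/-!
In an `r`-regular graph with `n ≤ 2r + 2`, a set of vertices with pairwise no common neighbour
has pairwise disjoint neighbourhoods, so three of them would force `3r ≤ n`, i.e. `r = 2`, `n = 6`,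
with the three neighbourhoods partitioning the vertex set. Then each of the three vertices lies
in the neighbourhood of another one, and no vertex can be adjacent to two of them, so they would
carry a perfect matching, which is impossible on three vertices. Hence every colour class of an
injective colouring has at most two vertices and `n ≤ 2 χᵢ`. Both `G` and `Ḡ` satisfy
`n ≤ 2r + 2` when `2k ∈ {n, n - 2}`, which gives the lower bound; the upper bound is `χᵢ ≤ n`.
-/

namespace SimpleGraph

variable {V : Type*}

theorem Colorable.card_le_mul_of_forall_isIndepSet_card_le [Fintype V] {H : SimpleGraph V}
    {m a : ℕ} (hc : H.Colorable m) (h : ∀ s : Finset V, H.IsIndepSet s → s.card ≤ a) :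
    Fintype.card V ≤ a * m := by
  classical
  obtain ⟨C⟩ := hc
  calc Fintype.card V = ∑ c : Fin m, (Finset.univ.filter fun x => C x = c).card := by
        rw [← Finset.card_univ]
        exact Finset.card_eq_sum_card_fiberwise fun x _ => Finset.mem_univ (C x)
    _ ≤ ∑ _c : Fin m, a := by
        refine Finset.sum_le_sum fun c _ => h _ ?_
        intro x hx y hy hxy hadj
        simp only [Finset.coe_filter, Finset.mem_univ, true_and, Set.mem_ofPred_eq] at hx hy
        exact C.valid hadj (hx.trans hy.symm)
    _ = a * m := by simp [mul_comm]

variable {R : SimpleGraph V}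

theorem even_card_of_isIndepSet_commonNbrGraph {s : Finset V}
    (hs : (commonNbrGraph R).IsIndepSet s) (h : ∀ x ∈ s, ∃ y ∈ s, R.Adj x y) :
    Even s.card := by
  have hM : ((⊤ : R.Subgraph).induce s).IsMatching := by
    intro x hx
    obtain ⟨y, hy, hxy⟩ := h x hx
    refine ⟨y, ⟨hx, hy, hxy⟩, fun z ⟨_, hz, hxz⟩ => ?_⟩
    by_contra hzy
    exact hs hz hy hzy ⟨hzy, x, hxz.symm, hxy.symm⟩
  let : Fintype ((⊤ : R.Subgraph).induce s).verts := inferInstanceAs (Fintype (s : Set V))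
  simpa using hM.even_card

theorem card_biUnion_neighborFinset_of_isIndepSet_commonNbrGraph [R.LocallyFinite]
    [DecidableEq V] {r : ℕ} (hreg : R.IsRegularOfDegree r) {s : Finset V}
    (hs : (commonNbrGraph R).IsIndepSet s) :
    (s.biUnion (R.neighborFinset ·)).card = s.card * r := by
  rw [Finset.card_biUnion,
    Finset.sum_const_nat fun x _ => (R.card_neighborFinset_eq_degree x).trans (hreg x)]
  intro x hx y hy hxy
  rw [Function.onFun, Finset.disjoint_left]
  intro z hzx hzy
  exact hs hx hy hxy ⟨hxy, z, (R.mem_neighborFinset x z).1 hzx, (R.mem_neighborFinset y z).1 hzy⟩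

theorem card_le_two_of_isIndepSet_commonNbrGraph [Fintype V] [DecidableRel R.Adj] {r : ℕ}
    (hreg : R.IsRegularOfDegree r) (hn : 5 ≤ Fintype.card V)
    (hr : Fintype.card V ≤ 2 * r + 2) {s : Finset V} (hs : (commonNbrGraph R).IsIndepSet s) :
    s.card ≤ 2 := by
  classical
  by_contra! hs_gt
  have hunion := card_biUnion_neighborFinset_of_isIndepSet_commonNbrGraph hreg hs
  have hle : s.card * r ≤ Fintype.card V := hunion ▸ Finset.card_le_univ _
  have h3r : 3 * r ≤ s.card * r := Nat.mul_le_mul_right r hs_gt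
  obtain rfl : r = 2 := by omega
  have hcover : s.biUnion (R.neighborFinset ·) = Finset.univ :=
    Finset.eq_univ_of_card _ (by omega)
  have hmatched : ∀ x ∈ s, ∃ y ∈ s, R.Adj x y := by
    intro x _
    obtain ⟨y, hy, hxy⟩ := Finset.mem_biUnion.1 (hcover ▸ Finset.mem_univ x)
    exact ⟨y, hy, ((R.mem_neighborFinset y x).1 hxy).symm⟩
  have hs3 : s.card = 3 := by omega
  exact (by decide : ¬Even 3) (hs3 ▸ even_card_of_isIndepSet_commonNbrGraph hs hmatched)

theorem card_le_two_mul_chiInj [Fintype V] [DecidableRel R.Adj] {r : ℕ}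
    (hreg : R.IsRegularOfDegree r) (hn : 5 ≤ Fintype.card V)
    (hr : Fintype.card V ≤ 2 * r + 2) : (Fintype.card V : ℕ∞) ≤ 2 * chiInj R := by
  have hc := (commonNbrGraph R).colorable_chromaticNumber_of_fintype
  have hfin : chiInj R ≠ ⊤ := ne_top_of_le_ne_top (ENat.natCast_ne_top _) chromaticNumber_le_card
  rw [← ENat.natCast_toNat hfin]
  exact_mod_cast hc.card_le_mul_of_forall_isIndepSet_card_le fun s hs =>
    card_le_two_of_isIndepSet_commonNbrGraph hreg hn hr hs

end SimpleGraph

theorem chiInj_nordhaus_gaddum_regular_mid {V : Type*} [Fintype V] (G : SimpleGraph V)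
    [DecidableRel G.Adj] (k : ℕ) (hn : 5 ≤ Fintype.card V)
    (hreg : G.IsRegularOfDegree k)
    (hk : 2 * k = Fintype.card V ∨ 2 * k = Fintype.card V - 2) :
    (Fintype.card V : ℕ∞) ≤ chiInj G + chiInj Gᶜ ∧
      chiInj G + chiInj Gᶜ ≤ 2 * (Fintype.card V : ℕ∞) := by
  classical
  have hG := card_le_two_mul_chiInj hreg hn (by omega)
  have hGc := card_le_two_mul_chiInj hreg.compl hn (by omega)
  have hG_le : chiInj G ≤ Fintype.card V := chromaticNumber_le_card
  have hGc_le : chiInj Gᶜ ≤ Fintype.card V := chromaticNumber_le_card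
  lift chiInj G to ℕ using ne_top_of_le_ne_top (ENat.natCast_ne_top _) hG_le with a
  lift chiInj Gᶜ to ℕ using ne_top_of_le_ne_top (ENat.natCast_ne_top _) hGc_le with b
  norm_cast at *
  omega
end

section
/- Let G be a finite simple graph of order n ≥ 5. Then n ≤ χᵢ(G) · χᵢ(Ḡ) ≤ n². -/
open SimpleGraph

/-
Every neighbourhood of `G` is a clique of the common-neighbour graph, so `χᵢ(G) ≥ deg_G v` for
all `v`. If any two distinct vertices have a common neighbour in `G` or in `Ḡ`, then the pair of
an injective colouring of `G` and one of `Ḡ` is a proper colouring of the complete graph, whence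
`n ≤ χᵢ(G) χᵢ(Ḡ)`. Otherwise there are `u ≠ v` with a common neighbour in neither graph; up to
swapping `G` and `Ḡ` they are adjacent in `G`, and then their neighbourhoods partition `V`.
So `deg u + deg v = n`, and if `deg u ≥ deg v` then `deg u ≥ 3` and
`χᵢ(G) χᵢ(Ḡ) ≥ deg_G u · deg_Ḡ v = deg u (deg u - 1) ≥ n`.
The upper bound holds because `χᵢ ≤ n`.
-/

namespace SimpleGraph

variable {V : Type*}

theorem Colorable.sup {G H : SimpleGraph V} {a b : ℕ} (hG : G.Colorable a) (hH : H.Colorable b) :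
    (G ⊔ H).Colorable (a * b) := by
  obtain ⟨CG⟩ := hG
  obtain ⟨CH⟩ := hH
  have C : (G ⊔ H).Coloring (Fin a × Fin b) :=
    Coloring.mk (fun v => (CG v, CH v)) fun {_ _} h hvw => by
      rcases h with h | h
      · exact CG.valid h (congrArg Prod.fst hvw)
      · exact CH.valid h (congrArg Prod.snd hvw)
  simpa using C.colorable

theorem chromaticNumber_sup_le_mul [Finite V] (G H : SimpleGraph V) :
    (G ⊔ H).chromaticNumber ≤ G.chromaticNumber * H.chromaticNumber := by
  have hG := G.colorable_chromaticNumber_of_fintype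
  have hH := H.colorable_chromaticNumber_of_fintype
  rw [← ENat.natCast_toNat (chromaticNumber_ne_top_iff_exists.mpr ⟨_, hG⟩),
    ← ENat.natCast_toNat (chromaticNumber_ne_top_iff_exists.mpr ⟨_, hH⟩)]
  exact_mod_cast (hG.sup hH).chromaticNumber_le

end SimpleGraph

section InjectiveColoring

variable {V : Type*}

theorem isClique_commonNbrGraph_neighborSet (G : SimpleGraph V) (v : V) :
    (commonNbrGraph G).IsClique (G.neighborSet v) :=
  fun _ hx _ hy hxy => ⟨hxy, v, G.adj_symm hx, G.adj_symm hy⟩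

variable [Fintype V]

theorem degree_le_chiInj (G : SimpleGraph V) [DecidableRel G.Adj] (v : V) :
    (G.degree v : ℕ∞) ≤ chiInj G := by
  have h := isClique_commonNbrGraph_neighborSet G v
  rw [← coe_neighborFinset] at h
  exact h.card_le_chromaticNumber

theorem card_le_chiInj_mul_of_top_le (G : SimpleGraph V)
    (h : ⊤ ≤ commonNbrGraph G ⊔ commonNbrGraph Gᶜ) :
    (Fintype.card V : ℕ∞) ≤ chiInj G * chiInj Gᶜ :=
  chromaticNumber_top (V := V) ▸ (chromaticNumber_mono _ h).trans (chromaticNumber_sup_le_mul _ _)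

theorem degree_add_degree_eq_card {G : SimpleGraph V} [DecidableRel G.Adj] {u v : V}
    (huv : G.Adj u v) (hG : ¬(commonNbrGraph G).Adj u v) (hGc : ¬(commonNbrGraph Gᶜ).Adj u v) :
    G.degree u + G.degree v = Fintype.card V := by
  classical
  have hdisj : Disjoint (G.neighborFinset u) (G.neighborFinset v) :=
    Finset.disjoint_left.mpr fun w hu hv =>
      hG ⟨huv.ne, w, (G.mem_neighborFinset u w).mp hu, (G.mem_neighborFinset v w).mp hv⟩
  have hcover : G.neighborFinset u ∪ G.neighborFinset v = Finset.univ := by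
    refine Finset.eq_univ_of_forall fun w => ?_
    simp only [Finset.mem_union, mem_neighborFinset]
    by_contra! hw
    have hwu : w ≠ u := by rintro rfl; exact hw.2 huv.symm
    have hwv : w ≠ v := by rintro rfl; exact hw.1 huv
    exact hGc ⟨huv.ne, w, (G.compl_adj u w).mpr ⟨hwu.symm, hw.1⟩,
      (G.compl_adj v w).mpr ⟨hwv.symm, hw.2⟩⟩
  rw [← card_neighborFinset_eq_degree, ← card_neighborFinset_eq_degree,
    ← Finset.card_union_of_disjoint hdisj, hcover, Finset.card_univ]

theorem card_le_chiInj_mul_of_adj {G : SimpleGraph V} (hn : 5 ≤ Fintype.card V) {u v : V}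
    (huv : G.Adj u v) (hG : ¬(commonNbrGraph G).Adj u v) (hGc : ¬(commonNbrGraph Gᶜ).Adj u v) :
    (Fintype.card V : ℕ∞) ≤ chiInj G * chiInj Gᶜ := by
  classical
  wlog hle : G.degree v ≤ G.degree u generalizing u v
  · exact this huv.symm (fun h => hG h.symm) (fun h => hGc h.symm) (by omega)
  have hsum := degree_add_degree_eq_card huv hG hGc
  have hcompl : Gᶜ.degree v + 1 = G.degree u := by rw [degree_compl]; omega
  have hprod : Fintype.card V ≤ G.degree u * Gᶜ.degree v :=
    calc Fintype.card V ≤ G.degree u * 2 := by omega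
      _ ≤ G.degree u * Gᶜ.degree v := Nat.mul_le_mul_left _ (by omega)
  calc (Fintype.card V : ℕ∞) ≤ (G.degree u : ℕ∞) * (Gᶜ.degree v : ℕ∞) := by exact_mod_cast hprod
    _ ≤ chiInj G * chiInj Gᶜ := mul_le_mul' (degree_le_chiInj G u) (degree_le_chiInj Gᶜ v)

theorem card_le_chiInj_mul_chiInj_compl (G : SimpleGraph V) (hn : 5 ≤ Fintype.card V) :
    (Fintype.card V : ℕ∞) ≤ chiInj G * chiInj Gᶜ := by
  by_cases htop : ⊤ ≤ commonNbrGraph G ⊔ commonNbrGraph Gᶜ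
  · exact card_le_chiInj_mul_of_top_le G htop
  simp only [le_iff_adj, top_adj, sup_adj, not_forall, not_or] at htop
  obtain ⟨u, v, huv, hG, hGc⟩ := htop
  by_cases hadj : G.Adj u v
  · exact card_le_chiInj_mul_of_adj hn hadj hG hGc
  · have h := card_le_chiInj_mul_of_adj hn ((G.compl_adj u v).mpr ⟨huv, hadj⟩) hGc
      (by rwa [compl_compl])
    rwa [compl_compl, mul_comm] at h

end InjectiveColoring

theorem chiInj_nordhaus_gaddum_prod {V : Type*} [Fintype V] (G : SimpleGraph V)
    (hn : 5 ≤ Fintype.card V) :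
    (Fintype.card V : ℕ∞) ≤ chiInj G * chiInj Gᶜ ∧
      chiInj G * chiInj Gᶜ ≤ (Fintype.card V : ℕ∞) ^ 2 :=
  ⟨card_le_chiInj_mul_chiInj_compl G hn,
    (mul_le_mul' chromaticNumber_le_card chromaticNumber_le_card).trans_eq (sq _).symm⟩
end

section
/- For every integer k ≥ 3, the complete bipartite graph K_{k+1,k} of order n = 2k+1 satisfies χᵢ(K_{k+1,k}) + χᵢ(complement of K_{k+1,k}) = 2k + 2 = n + 1. -/
open SimpleGraph

/-! Two vertices of `K_{V,W}` have a common neighbour iff they lie in the same part, so the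
common-neighbour graph of `K_{V,W}` is its complement `K_V ⊕ K_W`. In a clique, two vertices have a
common neighbour iff a third vertex exists, so once both parts have at least three vertices,
`K_V ⊕ K_W` is also its own common-neighbour graph. Both injective chromatic numbers therefore equal
`χ(K_V ⊕ K_W) = max |V| |W|`, which is `k + 1` here. -/

namespace SimpleGraph

variable {V W : Type*}

theorem compl_completeBipartiteGraph :
    (completeBipartiteGraph V W)ᶜ = (⊤ : SimpleGraph V) ⊕g (⊤ : SimpleGraph W) := by
  ext (v | w) (v' | w') <;> simp [completeBipartiteGraph]

theorem commonNbrGraph_completeBipartiteGraph [Nonempty V] [Nonempty W] :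
    commonNbrGraph (completeBipartiteGraph V W) = (completeBipartiteGraph V W)ᶜ := by
  ext (v | w) (v' | w') <;>
    simp [commonNbrGraph, completeBipartiteGraph, Sum.exists]

theorem commonNbrGraph_sum (G : SimpleGraph V) (H : SimpleGraph W) :
    commonNbrGraph (G ⊕g H) = commonNbrGraph G ⊕g commonNbrGraph H := by
  ext (v | w) (v' | w') <;> simp [commonNbrGraph, Sum.exists]

theorem commonNbrGraph_top (hV : 3 ≤ ENat.card V) :
    commonNbrGraph (⊤ : SimpleGraph V) = ⊤ := by
  ext u v
  refine ⟨And.left, fun huv ↦ ⟨huv, ?_⟩⟩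
  obtain ⟨w, hwu, hwv⟩ := ENat.exists_ne_ne_of_three_le hV u v
  exact ⟨w, hwu.symm, hwv.symm⟩

theorem chromaticNumber_compl_completeBipartiteGraph :
    (completeBipartiteGraph V W)ᶜ.chromaticNumber = max (ENat.card V) (ENat.card W) := by
  simp [compl_completeBipartiteGraph, chromaticNumber_top_eq_enat_card]

theorem chiInj_completeBipartiteGraph [Nonempty V] [Nonempty W] :
    chiInj (completeBipartiteGraph V W) = max (ENat.card V) (ENat.card W) := by
  rw [chiInj, commonNbrGraph_completeBipartiteGraph,
    chromaticNumber_compl_completeBipartiteGraph]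

theorem chiInj_compl_completeBipartiteGraph (hV : 3 ≤ ENat.card V) (hW : 3 ≤ ENat.card W) :
    chiInj (completeBipartiteGraph V W)ᶜ = max (ENat.card V) (ENat.card W) := by
  rw [chiInj, compl_completeBipartiteGraph, commonNbrGraph_sum, commonNbrGraph_top hV,
    commonNbrGraph_top hW, ← compl_completeBipartiteGraph,
    chromaticNumber_compl_completeBipartiteGraph]

end SimpleGraph

theorem chiInj_completeBipartite_odd (k : ℕ) (hk : 3 ≤ k) :
    chiInj (completeBipartiteGraph (Fin (k + 1)) (Fin k))
      + chiInj (completeBipartiteGraph (Fin (k + 1)) (Fin k))ᶜ = (2 * k : ℕ∞) + 2 := by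
  have : NeZero k := ⟨by omega⟩
  have hk' : (3 : ℕ∞) ≤ k := by exact_mod_cast hk
  rw [chiInj_completeBipartiteGraph, chiInj_compl_completeBipartiteGraph]
  all_goals simp only [ENat.card_eq_coe_fintype_card, Fintype.card_fin, Nat.cast_add, Nat.cast_one]
  · rw [max_eq_left le_self_add]
    ring
  · exact hk'.trans le_self_add
  · exact hk'
end

section
/- For every integer n ≥ 9 there exists a finite simple graph G of order n such that every two distinct vertices of G have a common neighbor in G and every two distinct vertices of Ḡ have a common neighbor in Ḡ; consequently χᵢ(G) + χᵢ(Ḡ) = 2n and χᵢ(G) · χᵢ(Ḡ) = n². -/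
open SimpleGraph

/-! Take the rook's graph `K₃ □ K_k` on `Fin 3 × Fin k` with `k = n / 3 ≥ 3`, i.e. three mutually
matched `k`-cliques. Any two cells share a line with some third cell, and any two cells both miss
the two lines through some third cell, so every pair of vertices has a common neighbour both in the
graph and in its complement. Pulling the graph back along a surjection `Fin n → Fin 3 × Fin k`
(the leftover vertices become twins) keeps both properties, so the common-neighbour graphs of `G`
and `Gᶜ` are complete and `χᵢ(G) = χᵢ(Gᶜ) = n`. -/

lemma commonNbrGraph_eq_top {V : Type*} {G : SimpleGraph V}
    (h : ∀ u v, u ≠ v → ∃ w, G.Adj u w ∧ G.Adj v w) : commonNbrGraph G = ⊤ := by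
  ext u v
  exact ⟨fun huv => huv.1, fun huv => ⟨huv, h u v huv⟩⟩

lemma chiInj_eq_card {V : Type*} [Fintype V] {G : SimpleGraph V}
    (h : ∀ u v, u ≠ v → ∃ w, G.Adj u w ∧ G.Adj v w) : chiInj G = Fintype.card V := by
  rw [chiInj, commonNbrGraph_eq_top h, chromaticNumber_top]

lemma exists_ne_ne_of_three_le_card {α : Type*} [Fintype α] (h : 3 ≤ Fintype.card α) (a b : α) :
    ∃ c, c ≠ a ∧ c ≠ b := by
  classical
  have hab : ({a, b} : Finset α).card < (Finset.univ : Finset α).card :=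
    Finset.card_le_two.trans_lt (by rwa [Finset.card_univ])
  obtain ⟨c, -, hc⟩ := Finset.exists_mem_notMem_of_card_lt_card hab
  simp only [Finset.mem_insert, Finset.mem_singleton, not_or] at hc
  exact ⟨c, hc⟩

lemma exists_comap_adj_adj {V W : Type*} {H : SimpleGraph W} {f : V → W}
    (hf : Function.Surjective f) (hH : ∀ p q, ∃ w, H.Adj p w ∧ H.Adj q w) (u v : V) :
    ∃ w, (H.comap f).Adj u w ∧ (H.comap f).Adj v w := by
  obtain ⟨x, hux, hvx⟩ := hH (f u) (f v)
  obtain ⟨w, rfl⟩ := hf x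
  exact ⟨w, hux, hvx⟩

lemma compl_comap_le {V W : Type*} (H : SimpleGraph W) (f : V → W) :
    Hᶜ.comap f ≤ (H.comap f)ᶜ :=
  fun _ _ h => ⟨fun huv => h.1 (congrArg f huv), h.2⟩

lemma exists_surjective_of_card_le {α β : Type*} [Fintype α] [Fintype β] [Nonempty β]
    (h : Fintype.card β ≤ Fintype.card α) : ∃ f : α → β, Function.Surjective f := by
  obtain ⟨e⟩ := Function.Embedding.nonempty_of_card_le h
  exact ⟨Function.invFun e, Function.invFun_surjective e.injective⟩

section Rook

variable {α β : Type*} [Fintype α] [Fintype β]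

lemma exists_boxProd_top_adj_adj (hα : 3 ≤ Fintype.card α) (hβ : 3 ≤ Fintype.card β)
    (p q : α × β) :
    ∃ w, (⊤ □ ⊤ : SimpleGraph (α × β)).Adj p w ∧ (⊤ □ ⊤).Adj q w := by
  obtain ⟨a, i⟩ := p
  obtain ⟨b, j⟩ := q
  by_cases hab : a = b
  · obtain ⟨r, hri, hrj⟩ := exists_ne_ne_of_three_le_card hβ i j
    exact ⟨(a, r), by simp [hri.symm, hrj.symm, hab]⟩
  by_cases hij : i = j
  · obtain ⟨c, hca, hcb⟩ := exists_ne_ne_of_three_le_card hα a b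
    exact ⟨(c, i), by simp [hca.symm, hcb.symm, hij]⟩
  exact ⟨(a, j), by simp [hij, Ne.symm hab]⟩

lemma exists_compl_boxProd_top_adj_adj (hα : 3 ≤ Fintype.card α) (hβ : 3 ≤ Fintype.card β)
    (p q : α × β) :
    ∃ w, (⊤ □ ⊤ : SimpleGraph (α × β))ᶜ.Adj p w ∧ (⊤ □ ⊤)ᶜ.Adj q w := by
  obtain ⟨c, hca, hcb⟩ := exists_ne_ne_of_three_le_card hα p.1 q.1
  obtain ⟨r, hri, hrj⟩ := exists_ne_ne_of_three_le_card hβ p.2 q.2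
  refine ⟨(c, r), ?_, ?_⟩ <;> simp [Prod.ext_iff, hca.symm, hcb.symm, hri.symm, hrj.symm]

end Rook

theorem exists_chiInj_extremal (n : ℕ) (hn : 9 ≤ n) :
    ∃ G : SimpleGraph (Fin n),
      (∀ u v : Fin n, u ≠ v → ∃ w, G.Adj u w ∧ G.Adj v w) ∧
      (∀ u v : Fin n, u ≠ v → ∃ w, Gᶜ.Adj u w ∧ Gᶜ.Adj v w) ∧
      chiInj G + chiInj Gᶜ = 2 * (n : ℕ∞) ∧
      chiInj G * chiInj Gᶜ = (n : ℕ∞) ^ 2 := by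
  have h3 : 3 ≤ Fintype.card (Fin 3) := le_of_eq (Fintype.card_fin 3).symm
  have hk : 3 ≤ Fintype.card (Fin (n / 3)) := by rw [Fintype.card_fin]; omega
  have : NeZero (n / 3) := ⟨by omega⟩
  obtain ⟨f, hf⟩ : ∃ f : Fin n → Fin 3 × Fin (n / 3), Function.Surjective f :=
    exists_surjective_of_card_le (by simp only [Fintype.card_prod, Fintype.card_fin]; omega)
  let G := (⊤ □ ⊤ : SimpleGraph (Fin 3 × Fin (n / 3))).comap f
  have hG (u v : Fin n) (_ : u ≠ v) : ∃ w, G.Adj u w ∧ G.Adj v w :=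
    exists_comap_adj_adj hf (exists_boxProd_top_adj_adj h3 hk) u v
  have hGc (u v : Fin n) (_ : u ≠ v) : ∃ w, Gᶜ.Adj u w ∧ Gᶜ.Adj v w := by
    obtain ⟨w, huw, hvw⟩ := exists_comap_adj_adj hf (exists_compl_boxProd_top_adj_adj h3 hk) u v
    exact ⟨w, compl_comap_le _ f huw, compl_comap_le _ f hvw⟩
  have hχ : chiInj G = n ∧ chiInj Gᶜ = n := by
    rw [chiInj_eq_card hG, chiInj_eq_card hGc, Fintype.card_fin, and_self]
  exact ⟨G, hG, hGc, by rw [hχ.1, hχ.2, two_mul], by rw [hχ.1, hχ.2, sq]⟩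
end

section
/- For every integer n ≥ 5 there exists a finite simple graph G of order n such that any two distinct vertices of G are at distance at most 2 in G and any two distinct vertices of Ḡ are at distance at most 2 in Ḡ; consequently χ(G²) + χ(Ḡ²) = 2n and χ(G²) · χ(Ḡ²) = n². -/
/-!
Blow up vertex `1` of the pentagon into `n - 4` pairwise nonadjacent copies (this is the paper's
`F_n`, with `xᵢ = i - 1`). The pentagon has diameter two and so does its complement, another
pentagon, and both properties survive the blow-up since every vertex of the pentagon keeps a
representative. Hence the squares of `F_n` and of its complement are complete, and both have
chromatic number `n`.
-/

open SimpleGraph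

/-- The square of `G`: two distinct vertices are adjacent iff their distance
in `G` is at most 2 (i.e. they are adjacent or at distance exactly 2). -/
def squareGraph {V : Type*} (G : SimpleGraph V) : SimpleGraph V where
  Adj u v := G.Adj u v ∨ G.dist u v = 2
  symm := by
    constructor
    rintro u v (h | h)
    · exact Or.inl h.symm
    · exact Or.inr (by rwa [SimpleGraph.dist_comm])
  loopless := by
    constructor
    rintro v (h | h)
    · exact G.irrefl h
    · simp [SimpleGraph.dist_self] at h

namespace SimpleGraph

variable {V W : Type*} {G : SimpleGraph V}

lemma dist_eq_two_of_mem_commonNeighbors {u v w : V} (huv : u ≠ v) (hadj : ¬G.Adj u v)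
    (hw : w ∈ G.commonNeighbors u v) : G.dist u v = 2 := by
  simp [dist, edist_eq_two_iff.mpr ⟨huv, hadj, w, hw⟩]

lemma adj_or_dist_eq_two_of_commonNeighbors_nonempty
    (h : ∀ u v, u ≠ v → ¬G.Adj u v → (G.commonNeighbors u v).Nonempty) {u v : V} (huv : u ≠ v) :
    G.Adj u v ∨ G.dist u v = 2 := by
  by_cases hadj : G.Adj u v
  · exact .inl hadj
  · obtain ⟨w, hw⟩ := h u v huv hadj
    exact .inr (dist_eq_two_of_mem_commonNeighbors huv hadj hw)

lemma commonNeighbors_nonempty_of_comap_le {H : SimpleGraph W} {g : V → W}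
    (hg : Function.Surjective g) (hle : H.comap g ≤ G) {u v : V}
    (h : (H.commonNeighbors (g u) (g v)).Nonempty) : (G.commonNeighbors u v).Nonempty := by
  obtain ⟨c, hcu, hcv⟩ := h
  obtain ⟨w, rfl⟩ := hg c
  exact ⟨w, hle hcu, hle hcv⟩

lemma comap_compl_le_compl_comap (H : SimpleGraph W) (g : V → W) :
    Hᶜ.comap g ≤ (H.comap g)ᶜ := fun _ _ ⟨hne, hadj⟩ =>
  ⟨fun huv => hne (congrArg g huv), hadj⟩

end SimpleGraph

lemma squareGraph_eq_top {V : Type*} {G : SimpleGraph V}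
    (h : ∀ u v, u ≠ v → ¬G.Adj u v → (G.commonNeighbors u v).Nonempty) :
    squareGraph G = ⊤ := by
  ext u v
  exact ⟨(squareGraph G).ne_of_adj, adj_or_dist_eq_two_of_commonNeighbors_nonempty h⟩

lemma chromaticNumber_squareGraph {V : Type*} [Fintype V] {G : SimpleGraph V}
    (h : ∀ u v, u ≠ v → ¬G.Adj u v → (G.commonNeighbors u v).Nonempty) :
    (squareGraph G).chromaticNumber = Fintype.card V := by
  rw [squareGraph_eq_top h, chromaticNumber_top]

lemma cycleGraph_five_commonNeighbors_nonempty :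
    ∀ a b : Fin 5, ¬(cycleGraph 5).Adj a b → ∃ c, c ∈ (cycleGraph 5).commonNeighbors a b := by
  decide

lemma cycleGraph_five_compl_commonNeighbors_nonempty :
    ∀ a b : Fin 5, (cycleGraph 5).Adj a b → ∃ c, c ∈ (cycleGraph 5)ᶜ.commonNeighbors a b := by
  decide

def pentagonCollapse (n : ℕ) (v : Fin n) : Fin 5 :=
  if h : (v : ℕ) < 5 then ⟨v, h⟩ else 1

lemma pentagonCollapse_surjective {n : ℕ} (hn : 5 ≤ n) :
    Function.Surjective (pentagonCollapse n) := fun c =>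
  ⟨Fin.castLE hn c, by simp [pentagonCollapse]⟩

def pentagonBlowup (n : ℕ) : SimpleGraph (Fin n) :=
  (cycleGraph 5).comap (pentagonCollapse n)

lemma pentagonBlowup_commonNeighbors_nonempty {n : ℕ} (hn : 5 ≤ n) (u v : Fin n)
    (h : ¬(pentagonBlowup n).Adj u v) : ((pentagonBlowup n).commonNeighbors u v).Nonempty :=
  commonNeighbors_nonempty_of_comap_le (pentagonCollapse_surjective hn) le_rfl
    (cycleGraph_five_commonNeighbors_nonempty _ _ h)

lemma compl_pentagonBlowup_commonNeighbors_nonempty {n : ℕ} (hn : 5 ≤ n) (u v : Fin n)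
    (huv : u ≠ v) (h : ¬(pentagonBlowup n)ᶜ.Adj u v) :
    ((pentagonBlowup n)ᶜ.commonNeighbors u v).Nonempty :=
  commonNeighbors_nonempty_of_comap_le (pentagonCollapse_surjective hn)
    (comap_compl_le_compl_comap _ _)
    (cycleGraph_five_compl_commonNeighbors_nonempty _ _ (not_not.mp fun h' => h ⟨huv, h'⟩))

theorem exists_square_chromatic_extremal (n : ℕ) (hn : 5 ≤ n) :
    ∃ G : SimpleGraph (Fin n),
      (∀ u v : Fin n, u ≠ v → (G.Adj u v ∨ G.dist u v = 2)) ∧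
      (∀ u v : Fin n, u ≠ v → (Gᶜ.Adj u v ∨ Gᶜ.dist u v = 2)) ∧
      (squareGraph G).chromaticNumber + (squareGraph Gᶜ).chromaticNumber = 2 * (n : ℕ∞) ∧
      (squareGraph G).chromaticNumber * (squareGraph Gᶜ).chromaticNumber = (n : ℕ∞) ^ 2 := by
  have hG := fun u v (_ : u ≠ v) => pentagonBlowup_commonNeighbors_nonempty hn u v
  have hGc := compl_pentagonBlowup_commonNeighbors_nonempty hn
  refine ⟨pentagonBlowup n, fun _ _ => adj_or_dist_eq_two_of_commonNeighbors_nonempty hG,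
    fun _ _ => adj_or_dist_eq_two_of_commonNeighbors_nonempty hGc, ?_, ?_⟩ <;>
  rw [chromaticNumber_squareGraph hG, chromaticNumber_squareGraph hGc, Fintype.card_fin] <;>
  ring
end
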